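/- For every M > 0 and every ε ∈ (0, 1/2) there exist μ > 0 and C > 0 such that the following holds. Let c₃, γ ∈ ℝ with |c₃| + |γ| ≤ μ, and let U solve the profile ODE with parameters (c₃, γ) and satisfy sup_{y ∈ (−1,1)} |U(y)| ≤ M(|c₃| + |γ|) and sup_{y ∈ (−1,1)} |U(y)| < 4ε. Then for all y ∈ (−1, 0], |U(y)| ≤ C (|c₃| + |γ|) (1+y)^{1−2ε}. -/

import Mathlib

open Set

/-- `U` solves the profile ODE with parameters `(c₃, γ)`:
`U` is continuous on `[-1,1]`, `C²` on `(-1,1)`, satisfies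
`(1-y²)U' + 2yU + U²/2 = c₃(1-y²)` on `(-1,1)`, and `U(0) = γ`. -/
def SolvesProfileODE (c₃ γ : ℝ) (U : ℝ → ℝ) : Prop :=
  ContinuousOn U (Icc (-1) 1) ∧
  ContDiffOn ℝ 2 U (Ioo (-1) 1) ∧
  (∀ y ∈ Ioo (-1 : ℝ) 1,
    (1 - y ^ 2) * deriv U y + 2 * y * U y + (1 / 2) * (U y) ^ 2 = c₃ * (1 - y ^ 2)) ∧
  U 0 = γ

/-!
Compare `U` and `-U` on `(-1, 0]` with the explicit barrier
`ψ(y) = K s ((1 + y) ^ (1 - 2ε) - (1 + y) / 2)`, where `s = |c₃| + |γ|` and `K = (M + 1) / ε`.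
Since `K ≥ 2`, `ψ(0) = K s / 2 ≥ |γ|`. Wherever `±U > ψ ≥ 0`, the ODE together with
`U² ≤ 4ε (1 - y) |U|` and `|U| ≤ M s` gives `(±U)' ≥ ψ'`; so `±U` can never rise above
`ψ` when moving left from `0`.
-/

theorem nonpos_of_nonpos_right_of_deriv_nonneg_of_pos {F F' : ℝ → ℝ} {a b : ℝ}
    (hc : ContinuousOn F (Icc a b)) (hd : ∀ x ∈ Ioo a b, HasDerivAt F (F' x) x)
    (hpos : ∀ x ∈ Ioo a b, 0 < F x → 0 ≤ F' x) (hb : F b ≤ 0) :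
    ∀ x ∈ Icc a b, F x ≤ 0 := by
  intro x hx
  by_contra! hFx
  set S := Icc x b ∩ F ⁻¹' Iic 0
  have hbS : b ∈ S := ⟨⟨hx.2, le_rfl⟩, hb⟩
  have hS_bdd : BddBelow S := bddBelow_Icc.mono inter_subset_left
  set c := sInf S
  have hcS : c ∈ S :=
    ((hc.mono (Icc_subset_Icc hx.1 le_rfl)).preimage_isClosed_of_isClosed isClosed_Icc
      isClosed_Iic).csInf_mem ⟨b, hbS⟩ hS_bdd
  have hFc : F c ≤ 0 := hcS.2
  have hxc : x < c := hcS.1.1.lt_of_ne (by intro h; rw [h] at hFx; linarith)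
  obtain ⟨ξ, hξ, hslope⟩ := exists_hasDerivAt_eq_slope F F' hxc
    (hc.mono (Icc_subset_Icc hx.1 hcS.1.2))
    fun z hz => hd z ⟨hx.1.trans_lt hz.1, hz.2.trans_le hcS.1.2⟩
  have hFξ : 0 < F ξ := by
    by_contra! h
    exact hξ.2.not_ge (csInf_le hS_bdd ⟨⟨hξ.1.le, hξ.2.le.trans hcS.1.2⟩, h⟩)
  have hF'ξ : F' ξ < 0 := hslope ▸ div_neg_of_neg_of_pos (by linarith) (sub_pos.2 hxc)
  exact hF'ξ.not_ge (hpos ξ ⟨hx.1.trans_lt hξ.1, hξ.2.trans_le hcS.1.2⟩ hFξ)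

/-- The linear correction `-(1 + y) / 2` is what produces the margin `ε K s (1 - y²)` that absorbs
the forcing `c₃` and the bound `|U| ≤ M s` in the comparison. -/
noncomputable def barrier (A ε y : ℝ) : ℝ := A * ((1 + y) ^ (1 - 2 * ε) - (1 + y) / 2)

theorem hasDerivAt_barrier (A ε : ℝ) {y : ℝ} (hy : -1 < y) :
    HasDerivAt (barrier A ε) (A * ((1 - 2 * ε) * (1 + y) ^ (-2 * ε) - 1 / 2)) y := by
  have h1 : HasDerivAt (fun z : ℝ => 1 + z) 1 y := (hasDerivAt_id y).const_add 1
  have h := ((h1.rpow_const (p := 1 - 2 * ε) (Or.inl (by linarith))).sub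
    (h1.div_const 2)).const_mul A
  rwa [one_mul, show 1 - 2 * ε - 1 = -2 * ε by ring] at h

theorem barrier_zero (A ε : ℝ) : barrier A ε 0 = A / 2 := by
  norm_num [barrier]; ring

theorem barrier_le_mul_rpow {A : ℝ} (ε : ℝ) (hA : 0 ≤ A) {y : ℝ} (hy : -1 ≤ y) :
    barrier A ε y ≤ A * (1 + y) ^ (1 - 2 * ε) := by
  unfold barrier
  nlinarith [mul_nonneg hA (by linarith : (0:ℝ) ≤ (1 + y) / 2)]

theorem barrier_deriv_le {M ε s y v e : ℝ} (hM : 0 ≤ M) (hε : ε ∈ Ioo (0 : ℝ) (1 / 2))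
    (hs : 0 ≤ s) (hy : y ∈ Ioo (-1 : ℝ) 0) (hvM : v ≤ M * s) (hvε : v ≤ 4 * ε)
    (hv : barrier ((M + 1) / ε * s) ε y < v)
    (hode : -s * (1 - y ^ 2) - 2 * y * v - v ^ 2 / 2 ≤ (1 - y ^ 2) * e) :
    (M + 1) / ε * s * ((1 - 2 * ε) * (1 + y) ^ (-2 * ε) - 1 / 2) ≤ e := by
  obtain ⟨hε0, hε1⟩ := hε
  obtain ⟨hy1, hy0⟩ := hy
  set K := (M + 1) / ε
  have hKε : K * ε = M + 1 := div_mul_cancel₀ _ hε0.ne'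
  have hr : 0 < 1 + y := by linarith
  set q := (1 + y) ^ (-2 * ε)
  have hq : 1 ≤ q := Real.one_le_rpow_of_pos_of_le_one_of_nonpos hr (by linarith) (by linarith)
  have hsplit : (1 + y) ^ (1 - 2 * ε) = (1 + y) * q := by
    rw [show 1 - 2 * ε = 1 + -2 * ε by ring, Real.rpow_add hr, Real.rpow_one]
  rw [barrier, hsplit] at hv
  have hv0 : 0 ≤ v := by
    have hψ : 0 ≤ K * s * ((1 + y) * (q - 1 / 2)) :=
      mul_nonneg (by positivity) (mul_nonneg hr.le (by linarith))
    nlinarith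
  have hquad : v ^ 2 / 2 ≤ 2 * ε * (1 - y) * v := by
    nlinarith [mul_nonneg hv0 (by nlinarith : (0:ℝ) ≤ 4 * ε * (1 - y) - v)]
  refine le_of_mul_le_mul_left ?_ (by nlinarith : (0:ℝ) < 1 - y ^ 2)
  have hgap : 0 ≤ (1 - 2 * ε) * (1 - y) * (v - K * s * ((1 + y) * q - (1 + y) / 2)) :=
    mul_nonneg (mul_nonneg (by linarith) (by linarith)) (by linarith)
  have hMy : 0 ≤ M * s * (1 + y) * -y := mul_nonneg (by positivity) (by linarith)
  calc (1 - y ^ 2) * (K * s * ((1 - 2 * ε) * q - 1 / 2))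
      ≤ (1 - y ^ 2) * (K * s * ((1 - 2 * ε) * q - 1 / 2))
        + (1 - 2 * ε) * (1 - y) * (v - K * s * ((1 + y) * q - (1 + y) / 2))
        + M * s * (1 + y) * -y := by linarith
    _ = -s * (1 - y) * (1 + y) + (1 - 2 * ε) * (1 - y) * v - M * s * (1 + y) := by
        linear_combination -(s * (1 + y) * (1 - y)) * hKε
    _ ≤ -s * (1 - y ^ 2) - 2 * y * v - v ^ 2 / 2 := by
        nlinarith [mul_le_mul_of_nonneg_left hvM hr.le]
    _ ≤ (1 - y ^ 2) * e := hode

theorem le_barrier_of_supersolution {M ε s : ℝ} (hM : 0 ≤ M)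
    (hε : ε ∈ Ioo (0 : ℝ) (1 / 2)) (hs : 0 ≤ s) {W W' : ℝ → ℝ}
    (hWc : ContinuousOn W (Ioc (-1) 0)) (hW' : ∀ y ∈ Ioo (-1 : ℝ) 0, HasDerivAt W (W' y) y)
    (hW0 : W 0 ≤ s) (hWM : ∀ y ∈ Ioo (-1 : ℝ) 0, W y ≤ M * s)
    (hWε : ∀ y ∈ Ioo (-1 : ℝ) 0, W y ≤ 4 * ε)
    (hode : ∀ y ∈ Ioo (-1 : ℝ) 0,
      -s * (1 - y ^ 2) - 2 * y * W y - W y ^ 2 / 2 ≤ (1 - y ^ 2) * W' y) :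
    ∀ y ∈ Ioc (-1 : ℝ) 0, W y ≤ barrier ((M + 1) / ε * s) ε y := by
  intro t ht
  have hψ0 : W 0 - barrier ((M + 1) / ε * s) ε 0 ≤ 0 := by
    have hK : 2 ≤ (M + 1) / ε := by rw [le_div_iff₀ hε.1]; linarith [hε.2]
    rw [barrier_zero]
    nlinarith
  set ψ := barrier ((M + 1) / ε * s) ε
  have hsub : Icc t 0 ⊆ Ioc (-1) 0 := Icc_subset_Ioc ht.1 le_rfl
  have hcont : ContinuousOn (fun y => W y - ψ y) (Icc t 0) :=
    (hWc.mono hsub).sub fun y hy =>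
      (hasDerivAt_barrier _ ε (hsub hy).1).continuousAt.continuousWithinAt
  have hIoo : ∀ y ∈ Ioo t 0, y ∈ Ioo (-1 : ℝ) 0 := fun y hy =>
    ⟨ht.1.trans_le hy.1.le, hy.2⟩
  refine sub_nonpos.1 (nonpos_of_nonpos_right_of_deriv_nonneg_of_pos hcont
    (fun y hy => (hW' y (hIoo y hy)).sub (hasDerivAt_barrier _ ε (hIoo y hy).1))
    (fun y hy hpos => sub_nonneg.2 ?_) hψ0 t ⟨le_rfl, ht.2⟩)
  have hy := hIoo y hy
  exact barrier_deriv_le hM hε hs hy (hWM y hy) (hWε y hy) (sub_pos.1 hpos) (hode y hy)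

theorem SolvesProfileODE.hasDerivAt {c₃ γ : ℝ} {U : ℝ → ℝ}
    (hU : SolvesProfileODE c₃ γ U) {y : ℝ} (hy : y ∈ Ioo (-1 : ℝ) 1) :
    HasDerivAt U (deriv U y) y :=
  ((hU.2.1.differentiableOn two_ne_zero).differentiableAt (Ioo_mem_nhds hy.1 hy.2)).hasDerivAt

theorem SolvesProfileODE.signed_supersolution {c₃ γ : ℝ} {U : ℝ → ℝ}
    (hU : SolvesProfileODE c₃ γ U) {σ : ℝ} (hσ : |σ| = 1) {y : ℝ}
    (hy : y ∈ Ioo (-1 : ℝ) 1) :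
    -|c₃| * (1 - y ^ 2) - 2 * y * (σ * U y) - (σ * U y) ^ 2 / 2
      ≤ (1 - y ^ 2) * (σ * deriv U y) := by
  have hσ2 : σ ^ 2 = 1 := by rw [← sq_abs, hσ, one_pow]
  have hσ1 : σ ≤ 1 := hσ ▸ le_abs_self σ
  have hc₃ : -|c₃| ≤ σ * c₃ := by simpa [abs_mul, hσ] using neg_abs_le (σ * c₃)
  have hy2 : 0 < 1 - y ^ 2 := by nlinarith [hy.1, hy.2]
  have hode : (1 - y ^ 2) * (σ * deriv U y)
      = σ * c₃ * (1 - y ^ 2) - 2 * y * (σ * U y) - σ * U y ^ 2 / 2 := by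
    linear_combination σ * hU.2.2.1 y hy
  rw [hode, mul_pow, hσ2, one_mul]
  nlinarith [mul_le_mul_of_nonneg_right hc₃ hy2.le,
    mul_le_mul_of_nonneg_right hσ1 (sq_nonneg (U y))]

theorem SolvesProfileODE.signed_le_barrier {M ε c₃ γ : ℝ} (hM : 0 ≤ M)
    (hε : ε ∈ Ioo (0 : ℝ) (1 / 2)) {U : ℝ → ℝ} (hU : SolvesProfileODE c₃ γ U)
    (hUM : ∀ y ∈ Ioo (-1 : ℝ) 1, |U y| ≤ M * (|c₃| + |γ|))
    (hUε : ∀ y ∈ Ioo (-1 : ℝ) 1, |U y| < 4 * ε) {σ : ℝ} (hσ : |σ| = 1) :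
    ∀ y ∈ Ioc (-1 : ℝ) 0, σ * U y ≤ barrier ((M + 1) / ε * (|c₃| + |γ|)) ε y := by
  have hσU : ∀ y, σ * U y ≤ |U y| := fun y =>
    (le_abs_self _).trans_eq (by rw [abs_mul, hσ, one_mul])
  have hIoo : ∀ y ∈ Ioo (-1 : ℝ) 0, y ∈ Ioo (-1 : ℝ) 1 := fun y hy =>
    ⟨hy.1, hy.2.trans one_pos⟩
  refine le_barrier_of_supersolution hM hε (by positivity) (W' := fun y => σ * deriv U y)
    ((hU.1.mono (Ioc_subset_Icc_self.trans (Icc_subset_Icc le_rfl zero_le_one))).const_mul σ)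
    (fun y hy => (hU.hasDerivAt (hIoo y hy)).const_mul σ) ?_
    (fun y hy => (hσU y).trans (hUM y (hIoo y hy)))
    (fun y hy => (hσU y).trans (hUε y (hIoo y hy)).le)
    (fun y hy => le_trans ?_ (hU.signed_supersolution hσ (hIoo y hy)))
  · rw [← hU.2.2.2]; exact (hσU 0).trans (le_add_of_nonneg_left (abs_nonneg c₃))
  · have : 0 ≤ 1 - y ^ 2 := by nlinarith [hy.1, hy.2]
    nlinarith [le_add_of_nonneg_right (abs_nonneg γ) (a := |c₃|)]

theorem stmt8 (M : ℝ) (hM : 0 < M) (ε : ℝ) (hε : ε ∈ Ioo (0 : ℝ) (1 / 2)) :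
    ∃ μ > 0, ∃ C > 0, ∀ c₃ γ : ℝ, |c₃| + |γ| ≤ μ →
      ∀ U : ℝ → ℝ, SolvesProfileODE c₃ γ U →
        (∀ y ∈ Ioo (-1 : ℝ) 1, |U y| ≤ M * (|c₃| + |γ|)) →
        (∀ y ∈ Ioo (-1 : ℝ) 1, |U y| < 4 * ε) →
        ∀ y ∈ Ioc (-1 : ℝ) 0,
          |U y| ≤ C * (|c₃| + |γ|) * (1 + y) ^ (1 - 2 * ε) := by
  have hε0 := hε.1
  refine ⟨1, one_pos, (M + 1) / ε, by positivity, fun c₃ γ _ U hU hUM hUε y hy => ?_⟩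
  have hU_le := hU.signed_le_barrier hM.le hε hUM hUε (σ := 1) abs_one y hy
  have hneg_U_le := hU.signed_le_barrier hM.le hε hUM hUε (σ := -1) (by simp) y hy
  calc |U y| ≤ barrier ((M + 1) / ε * (|c₃| + |γ|)) ε y :=
        abs_le'.2 ⟨by simpa using hU_le, by simpa using hneg_U_le⟩
    _ ≤ _ := barrier_le_mul_rpow ε (by positivity) hy.1.le
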